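/- arXiv:1506.02360 — 4 statements merged into one kernel-verified Lean document; each statement's English description precedes it below -/
import Mathlib

section
/- Marginal cumulative distribution function of a UGAT coordinate: P(X_i ≤ x) = 1 − α_{i-1}^{x+1} · M(β+x+1, s, α)/M(β, s, α) for every x ∈ ℕ. -/
/-!
Split `ℕ^r` into `{m | m i ≤ x}` and its complement `{m | x + 1 ≤ m i}`. The shift
`m ↦ m + (x + 1) • eᵢ` is a bijection from `ℕ^r` onto the complement; it multiplies the weight
`∏ α_j ^ m_j` by `α_i ^ (x + 1)` and turns `∑ m_j + β` into `∑ m_j + (β + x + 1)`, so the mass of the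
complement is `α_i ^ (x + 1) M(β + x + 1, s, α)`.
-/

open scoped BigOperators

/-- Normalization constant of the UGAT distribution. -/
noncomputable def M (r : ℕ) (β s : ℝ) (α : Fin r → ℝ) : ℝ :=
  ∑' ℓ : Fin r → ℕ, (∏ i, α i ^ ℓ i) / ((∑ i, (ℓ i : ℝ)) + β) ^ s

/-- The UGAT joint probability mass function. -/
noncomputable def ugatPmf (r : ℕ) (β s : ℝ) (α : Fin r → ℝ) (x : Fin r → ℕ) : ℝ :=
  (∏ i, α i ^ x i) / (((∑ i, (x i : ℝ)) + β) ^ s * M r β s α)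

open Finset

theorem summable_prod_pow_of_lt_one {ι : Type*} [Fintype ι] {g : ι → ℝ}
    (hg₀ : ∀ i, 0 ≤ g i) (hg₁ : ∀ i, g i < 1) :
    Summable fun m : ι → ℕ => ∏ i, g i ^ m i := by
  classical
  refine summable_of_sum_le (c := ∏ i, (1 - g i)⁻¹)
    (fun m => prod_nonneg fun i _ => pow_nonneg (hg₀ i) _) fun u => ?_
  have hu : u ⊆ Fintype.piFinset fun i => u.image (· i) :=
    fun m hm => Fintype.mem_piFinset.2 fun i => mem_image_of_mem _ hm
  calc ∑ m ∈ u, ∏ i, g i ^ m i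
      ≤ ∑ m ∈ Fintype.piFinset (fun i => u.image (· i)), ∏ i, g i ^ m i :=
        sum_le_sum_of_subset_of_nonneg hu fun m _ _ => prod_nonneg fun i _ => pow_nonneg (hg₀ i) _
    _ = ∏ i, ∑ n ∈ u.image (· i), g i ^ n := (prod_univ_sum _ _).symm
    _ ≤ ∏ i, (1 - g i)⁻¹ := by
        refine prod_le_prod (fun i _ => sum_nonneg fun n _ => pow_nonneg (hg₀ i) _) fun i _ => ?_
        rw [← tsum_geometric_of_lt_one (hg₀ i) (hg₁ i)]
        exact (summable_geometric_of_lt_one (hg₀ i) (hg₁ i)).sum_le_tsum _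
          fun n _ => pow_nonneg (hg₀ i) n

def addSingleEquiv {ι : Type*} [DecidableEq ι] (i : ι) (k : ℕ) :
    (ι → ℕ) ≃ {m : ι → ℕ // k ≤ m i} where
  toFun m := ⟨m + Pi.single i k, by simp⟩
  invFun m := m.1 - Pi.single i k
  left_inv m := add_tsub_cancel_right m _
  right_inv m := Subtype.ext <| tsub_add_cancel_of_le <|
    update_le_iff.2 ⟨m.2, fun _ _ => Nat.zero_le _⟩

section Ugat

variable {r : ℕ} {β s : ℝ} {α : Fin r → ℝ}

noncomputable def ugatTerm (r : ℕ) (β s : ℝ) (α : Fin r → ℝ) (m : Fin r → ℕ) : ℝ :=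
  (∏ i, α i ^ m i) / ((∑ i, (m i : ℝ)) + β) ^ s

theorem M_eq_tsum_ugatTerm : M r β s α = ∑' m, ugatTerm r β s α m := rfl

theorem ugatPmf_eq_ugatTerm_div (m : Fin r → ℕ) :
    ugatPmf r β s α m = ugatTerm r β s α m / M r β s α :=
  (div_div _ _ _).symm

theorem ugatTerm_nonneg (hβ : 0 ≤ β) (hα : ∀ i, 0 ≤ α i) (m : Fin r → ℕ) :
    0 ≤ ugatTerm r β s α m := by
  unfold ugatTerm
  exact div_nonneg (prod_nonneg fun i _ => pow_nonneg (hα i) _) (by positivity)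

theorem summable_ugatTerm (hβ : 0 < β) (hs : 0 ≤ s) (hα₀ : ∀ i, 0 ≤ α i) (hα₁ : ∀ i, α i < 1) :
    Summable (ugatTerm r β s α) := by
  refine ((summable_prod_pow_of_lt_one hα₀ hα₁).div_const (β ^ s)).of_nonneg_of_le
    (ugatTerm_nonneg hβ.le hα₀) fun m => ?_
  have : 0 ≤ ∑ i, (m i : ℝ) := sum_nonneg fun i _ => (m i).cast_nonneg
  exact div_le_div_of_nonneg_left (prod_nonneg fun i _ => pow_nonneg (hα₀ i) _)
    (by positivity) (Real.rpow_le_rpow hβ.le (by linarith) hs)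

theorem M_pos (hβ : 0 < β) (hs : 0 ≤ s) (hα₀ : ∀ i, 0 ≤ α i) (hα₁ : ∀ i, α i < 1) :
    0 < M r β s α :=
  (summable_ugatTerm hβ hs hα₀ hα₁).tsum_pos (ugatTerm_nonneg hβ.le hα₀) 0
    (by simp [ugatTerm, Real.rpow_pos_of_pos hβ])

theorem ugatTerm_add_single (i : Fin r) (k : ℕ) (m : Fin r → ℕ) :
    ugatTerm r β s α (m + Pi.single i k : Fin r → ℕ) = α i ^ k * ugatTerm r (β + k) s α m := by
  have hprod : ∏ j, α j ^ (m + Pi.single i k : Fin r → ℕ) j = (∏ j, α j ^ m j) * α i ^ k := by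
    simp only [Pi.add_apply, pow_add, prod_mul_distrib, Pi.single_apply, pow_ite, pow_zero,
      prod_ite_eq', mem_univ, if_true]
  have hsum : ∑ j, ((m + Pi.single i k : Fin r → ℕ) j : ℝ) = (∑ j, (m j : ℝ)) + k := by
    simp only [Pi.add_apply, Nat.cast_add, sum_add_distrib, Pi.single_apply, Nat.cast_ite,
      Nat.cast_zero, sum_ite_eq', mem_univ, if_true]
  rw [ugatTerm, ugatTerm, hprod, hsum, add_assoc, add_comm (k : ℝ) β]
  ring

theorem tsum_ugatTerm_of_ge (i : Fin r) (k : ℕ) :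
    ∑' m : {m : Fin r → ℕ // k ≤ m i}, ugatTerm r β s α m = α i ^ k * M r (β + k) s α := by
  rw [← (addSingleEquiv i k).tsum_eq, M_eq_tsum_ugatTerm, ← tsum_mul_left]
  exact tsum_congr fun m => ugatTerm_add_single i k m

theorem tsum_ugatTerm_of_le (hβ : 0 < β) (hs : 0 ≤ s) (hα₀ : ∀ i, 0 ≤ α i)
    (hα₁ : ∀ i, α i < 1) (i : Fin r) (x : ℕ) :
    ∑' m : {m : Fin r → ℕ // m i ≤ x}, ugatTerm r β s α m
      = M r β s α - α i ^ (x + 1) * M r (β + x + 1) s α := by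
  have hsum := summable_ugatTerm hβ hs hα₀ hα₁
  have htail : ∑' m : ↥{m : Fin r → ℕ | m i ≤ x}ᶜ, ugatTerm r β s α m
      = α i ^ (x + 1) * M r (β + x + 1) s α := by
    rw [add_assoc, ← Nat.cast_add_one, ← tsum_ugatTerm_of_ge i (x + 1)]
    exact (Equiv.subtypeEquivRight (p := fun m : Fin r → ℕ => ¬m i ≤ x)
      fun m => not_le.trans Nat.lt_iff_add_one_le).tsum_eq fun m => ugatTerm r β s α m
  rw [← htail, eq_sub_iff_add_eq]
  exact (hsum.subtype _).tsum_add_tsum_compl (hsum.subtype _)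

end Ugat

theorem ugat_marginal_cdf_general (r : ℕ) (β s : ℝ) (hβ : 0 < β) (hs : 0 < s)
    (α : Fin r → ℝ) (hα : ∀ i, α i ∈ Set.Ioo (0 : ℝ) 1) (i : Fin r) (x : ℕ) :
    (∑' m : {m : Fin r → ℕ // m i ≤ x}, ugatPmf r β s α m)
      = 1 - α i ^ (x + 1) * M r (β + x + 1) s α / M r β s α := by
  have hα₀ : ∀ i, 0 ≤ α i := fun i => (hα i).1.le
  have hα₁ : ∀ i, α i < 1 := fun i => (hα i).2
  simp only [ugatPmf_eq_ugatTerm_div, tsum_div_const]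
  rw [tsum_ugatTerm_of_le hβ hs.le hα₀ hα₁, sub_div, div_self (M_pos hβ hs.le hα₀ hα₁).ne']

theorem ugat_marginal_cdf (r : ℕ) (hr : 1 ≤ r) (β s : ℝ) (hβ : 0 < β) (hs : 0 < s)
    (α : Fin r → ℝ) (hα : ∀ i, α i ∈ Set.Ioo (0 : ℝ) 1) (i : Fin r) (x : ℕ) :
    (∑' m : {m : Fin r → ℕ // m i ≤ x}, ugatPmf r β s α m)
      = 1 - α i ^ (x + 1) * M r (β + x + 1) s α / M r β s α :=
  ugat_marginal_cdf_general r β s hβ hs α hα i x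
end

section
/- Marginal probability mass function of a UGAT coordinate: for each i and x ∈ ℕ, P(X_i = x) = α_{i-1}^{x}·(M(β+x, s, α) − α_{i-1}·M(β+x+1, s, α))/M(β, s, α). -/
set_option maxHeartbeats 800000

open scoped BigOperators

private lemma summable_pi_fin_prod : ∀ (m : ℕ) (g : Fin m → ℕ → ℝ),
    (∀ j, Summable (g j)) → (∀ j k, 0 ≤ g j k) →
    Summable (fun n : Fin m → ℕ => ∏ j, g j (n j)) := by
  intro m
  induction m with
  | zero =>
    intro g _ _
    have h : (fun n : Fin 0 → ℕ => ∏ j, g j (n j)) = fun _ => 1 := by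
      funext n; simp
    rw [h]
    exact summable_of_finite_support (Set.toFinite _)
  | succ m ih =>
    intro g hg hg0
    refine (Equiv.summable_iff (Fin.consEquiv fun _ : Fin (m + 1) => ℕ)).mp ?_
    have h1 : (0 : ℕ → ℝ) ≤ fun k => g 0 k := Pi.le_def.mpr fun k => hg0 0 k
    have h2 : (0 : (Fin m → ℕ) → ℝ) ≤ fun n => ∏ j, g j.succ (n j) :=
      Pi.le_def.mpr fun n => Finset.prod_nonneg fun j _ => hg0 _ _
    have hF := Summable.mul_of_nonneg (hg 0)
      (ih (fun j => g j.succ) (fun j => hg _) (fun j k => hg0 _ _)) h1 h2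
    refine hF.congr fun p => ?_
    show g 0 p.1 * ∏ j, g j.succ (p.2 j)
      = ∏ j, g j (Fin.cons (α := fun _ : Fin (m + 1) => ℕ) p.1 p.2 j)
    rw [Fin.prod_univ_succ]
    simp

private lemma summable_pi_prod {ι : Type*} [Fintype ι] (g : ι → ℕ → ℝ)
    (hg : ∀ j, Summable (g j)) (hg0 : ∀ j k, 0 ≤ g j k) :
    Summable (fun n : ι → ℕ => ∏ j, g j (n j)) := by
  let e : ι ≃ Fin (Fintype.card ι) := Fintype.equivFin ι
  rw [← Equiv.summable_iff (Equiv.arrowCongr e.symm (Equiv.refl ℕ))]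
  have h : ((fun n : ι → ℕ => ∏ j, g j (n j)) ∘ (Equiv.arrowCongr e.symm (Equiv.refl ℕ)))
      = fun n : Fin (Fintype.card ι) → ℕ => ∏ k, g (e.symm k) (n k) := by
    funext n
    have h2 := Equiv.prod_comp e.symm (fun j : ι => g j (n (e j)))
    simp only [Equiv.apply_symm_apply] at h2
    simpa [Equiv.arrowCongr] using h2.symm
  rw [h]
  exact summable_pi_fin_prod _ _ (fun j => hg _) (fun j k => hg0 _ _)

/-- Auxiliary: the "reduced" normalization constant with coordinate `i` removed. -/
private noncomputable def Gaux (r : ℕ) (s : ℝ) (α : Fin r → ℝ) (i : Fin r) (t : ℝ) : ℝ :=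
  ∑' n : {j : Fin r // j ≠ i} → ℕ, (∏ j, α j.1 ^ n j) / ((∑ j, (n j : ℝ)) + t) ^ s

theorem ugat_marginal_pmf (r : ℕ) (hr : 1 ≤ r) (β s : ℝ) (hβ : 0 < β) (hs : 0 < s)
    (α : Fin r → ℝ) (hα : ∀ i, α i ∈ Set.Ioo (0 : ℝ) 1) (i : Fin r) (x : ℕ) :
    (∑' m : {m : Fin r → ℕ // m i = x}, ugatPmf r β s α m)
      = α i ^ x * (M r (β + x) s α - α i * M r (β + x + 1) s α) / M r β s α := by
  have hαi0 : (0:ℝ) < α i := (hα i).1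
  have hαi1 : α i < 1 := (hα i).2
  -- summability of pure product parts
  have hPfull : Summable (fun ℓ : Fin r → ℕ => ∏ j, α j ^ ℓ j) :=
    summable_pi_prod _ (fun j => summable_geometric_of_lt_one (hα j).1.le (hα j).2)
      (fun j k => pow_nonneg (hα j).1.le k)
  have hPsub : Summable (fun n : {j : Fin r // j ≠ i} → ℕ => ∏ j, α j.1 ^ n j) :=
    summable_pi_prod _ (fun j => summable_geometric_of_lt_one (hα j.1).1.le (hα j.1).2)
      (fun j k => pow_nonneg (hα j.1).1.le k)
  have hprodnn : ∀ ℓ : Fin r → ℕ, (0:ℝ) ≤ ∏ j, α j ^ ℓ j :=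
    fun ℓ => Finset.prod_nonneg fun j _ => pow_nonneg (hα j).1.le _
  have hprodnn' : ∀ n : {j : Fin r // j ≠ i} → ℕ, (0:ℝ) ≤ ∏ j, α j.1 ^ n j :=
    fun n => Finset.prod_nonneg fun j _ => pow_nonneg (hα j.1).1.le _
  have hsumnn : ∀ {ι : Type} [Fintype ι] (n : ι → ℕ), (0:ℝ) ≤ ∑ j, (n j : ℝ) :=
    fun n => Finset.sum_nonneg fun j _ => Nat.cast_nonneg _
  -- summability of the full summand
  have hfs : ∀ c : ℝ, 0 < c →
      Summable (fun ℓ : Fin r → ℕ => (∏ j, α j ^ ℓ j) / ((∑ j, (ℓ j : ℝ)) + c) ^ s) := by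
    intro c hc
    refine Summable.of_nonneg_of_le (fun ℓ => ?_) (fun ℓ => ?_) (hPfull.div_const (c ^ s))
    · exact div_nonneg (hprodnn ℓ) (Real.rpow_nonneg (by linarith [hsumnn ℓ]) s)
    · exact div_le_div_of_nonneg_left (hprodnn ℓ) (Real.rpow_pos_of_pos hc s)
        (Real.rpow_le_rpow hc.le (le_add_of_nonneg_left (hsumnn ℓ)) hs.le)
  have hgs : ∀ t : ℝ, 0 < t →
      Summable (fun n : {j : Fin r // j ≠ i} → ℕ =>
        (∏ j, α j.1 ^ n j) / ((∑ j, (n j : ℝ)) + t) ^ s) := by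
    intro t ht
    refine Summable.of_nonneg_of_le (fun n => ?_) (fun n => ?_) (hPsub.div_const (t ^ s))
    · exact div_nonneg (hprodnn' n) (Real.rpow_nonneg (by linarith [hsumnn n]) s)
    · exact div_le_div_of_nonneg_left (hprodnn' n) (Real.rpow_pos_of_pos ht s)
        (Real.rpow_le_rpow ht.le (le_add_of_nonneg_left (hsumnn n)) hs.le)
  -- basic facts about Gaux
  have hGnn : ∀ t : ℝ, 0 < t → 0 ≤ Gaux r s α i t := by
    intro t ht
    exact tsum_nonneg fun n =>
      div_nonneg (hprodnn' n) (Real.rpow_nonneg (by linarith [hsumnn n]) s)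
  have hGmono : ∀ t t' : ℝ, 0 < t → t ≤ t' → Gaux r s α i t' ≤ Gaux r s α i t := by
    intro t t' ht htt'
    refine Summable.tsum_le_tsum (fun n => ?_) (hgs t' (lt_of_lt_of_le ht htt')) (hgs t ht)
    exact div_le_div_of_nonneg_left (hprodnn' n)
      (Real.rpow_pos_of_pos (by linarith [hsumnn n]) s)
      (Real.rpow_le_rpow (by linarith [hsumnn n]) (by linarith) hs.le)
  have hMsum : ∀ c : ℝ, 0 < c →
      Summable (fun k : ℕ => α i ^ k * Gaux r s α i (c + k)) := by
    intro c hc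
    refine Summable.of_nonneg_of_le (fun k => ?_) (fun k => ?_)
      ((summable_geometric_of_lt_one hαi0.le hαi1).mul_right (Gaux r s α i c))
    · exact mul_nonneg (pow_nonneg hαi0.le _) (hGnn _ (by positivity))
    · exact mul_le_mul_of_nonneg_left
        (hGmono c (c + k) hc (le_add_of_nonneg_right (Nat.cast_nonneg _)))
        (pow_nonneg hαi0.le _)
  -- the splitting equivalence
  let e : (Fin r → ℕ) ≃ ℕ × ({j : Fin r // j ≠ i} → ℕ) := Equiv.funSplitAt i ℕ
  have hpoint : ∀ (c : ℝ) (p : ℕ × ({j : Fin r // j ≠ i} → ℕ)),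
      (∏ j, α j ^ (e.symm p) j) / ((∑ j, ((e.symm p) j : ℝ)) + c) ^ s
        = α i ^ p.1 * ((∏ j, α j.1 ^ p.2 j) / ((∑ j, (p.2 j : ℝ)) + (c + p.1)) ^ s) := by
    intro c p
    have h1 : (e.symm p) i = p.1 := congrArg Prod.fst (e.apply_symm_apply p)
    have h2 : ∀ j : {j : Fin r // j ≠ i}, (e.symm p) j.1 = p.2 j := fun j =>
      congrFun (congrArg Prod.snd (e.apply_symm_apply p)) j
    have hprod : ∏ j, α j ^ (e.symm p) j
        = α i ^ p.1 * ∏ j : {j : Fin r // j ≠ i}, α j.1 ^ p.2 j := by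
      rw [← Finset.mul_prod_erase Finset.univ _ (Finset.mem_univ i), h1]
      congr 1
      rw [Finset.prod_subtype (p := fun j => j ≠ i) (Finset.univ.erase i)
        (fun j => by simp) (fun j => α j ^ (e.symm p) j)]
      exact Finset.prod_congr rfl fun j _ => by rw [h2]
    have hsum : (∑ j, ((e.symm p) j : ℝ))
        = p.1 + ∑ j : {j : Fin r // j ≠ i}, (p.2 j : ℝ) := by
      rw [← Finset.add_sum_erase Finset.univ _ (Finset.mem_univ i), h1]
      congr 1
      rw [Finset.sum_subtype (p := fun j => j ≠ i) (Finset.univ.erase i)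
        (fun j => by simp) (fun j => ((e.symm p) j : ℝ))]
      exact Finset.sum_congr rfl fun j _ => by rw [h2]
    rw [hprod, hsum, mul_div_assoc]
    congr 3
    ring
  -- M in terms of Gaux
  have hM : ∀ c : ℝ, 0 < c →
      M r c s α = ∑' k : ℕ, α i ^ k * Gaux r s α i (c + k) := by
    intro c hc
    have hFs : Summable (fun p : ℕ × ({j : Fin r // j ≠ i} → ℕ) =>
        α i ^ p.1 * ((∏ j, α j.1 ^ p.2 j) / ((∑ j, (p.2 j : ℝ)) + (c + p.1)) ^ s)) := by
      have h := (Equiv.summable_iff e.symm).mpr (hfs c hc)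
      exact h.congr fun p => hpoint c p
    have h0 : M r c s α = ∑' p : ℕ × ({j : Fin r // j ≠ i} → ℕ),
        (∏ j, α j ^ (e.symm p) j) / ((∑ j, ((e.symm p) j : ℝ)) + c) ^ s :=
      (Equiv.tsum_eq e.symm
        (fun ℓ : Fin r → ℕ => (∏ j, α j ^ ℓ j) / ((∑ j, (ℓ j : ℝ)) + c) ^ s)).symm
    rw [h0, tsum_congr (fun p => hpoint c p),
      Summable.tsum_prod' hFs (fun k => hFs.prod_factor k)]
    refine tsum_congr fun k => ?_
    show ∑' n : {j : Fin r // j ≠ i} → ℕ,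
        α i ^ k * ((∏ j, α j.1 ^ n j) / ((∑ j, (n j : ℝ)) + (c + k)) ^ s)
      = α i ^ k * Gaux r s α i (c + k)
    exact tsum_mul_left
  -- the subtype sum
  let e2 : ({j : Fin r // j ≠ i} → ℕ) ≃ {m : Fin r → ℕ // m i = x} :=
    { toFun := fun n => ⟨e.symm (x, n), congrArg Prod.fst (e.apply_symm_apply (x, n))⟩
      invFun := fun m => (e m.1).2
      left_inv := fun n => by
        simp only [Equiv.apply_symm_apply]
      right_inv := fun m => Subtype.ext (by
        obtain ⟨m0, hm⟩ := m
        show e.symm (x, (e m0).2) = m0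
        rw [← hm]
        exact e.symm_apply_apply m0) }
  have hsub : (∑' m : {m : Fin r → ℕ // m i = x},
        (∏ j, α j ^ (m.1 j)) / ((∑ j, ((m.1 j) : ℝ)) + β) ^ s)
      = α i ^ x * Gaux r s α i (β + x) := by
    have h0 := Equiv.tsum_eq e2 (fun m : {m : Fin r → ℕ // m i = x} =>
      (∏ j, α j ^ (m.1 j)) / ((∑ j, ((m.1 j) : ℝ)) + β) ^ s)
    have h : ∀ n : {j : Fin r // j ≠ i} → ℕ,
        (∏ j, α j ^ ((e2 n).1 j)) / ((∑ j, (((e2 n).1 j) : ℝ)) + β) ^ s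
          = α i ^ x * ((∏ j, α j.1 ^ n j) / ((∑ j, (n j : ℝ)) + (β + x)) ^ s) :=
      fun n => hpoint β (x, n)
    exact h0.symm.trans ((tsum_congr h).trans tsum_mul_left)
  -- key identity
  have key : M r (β + x) s α - α i * M r (β + x + 1) s α = Gaux r s α i (β + x) := by
    have hc1 : (0:ℝ) < β + x := by positivity
    have hc2 : (0:ℝ) < β + x + 1 := by positivity
    rw [hM _ hc1, hM _ hc2, Summable.tsum_eq_zero_add (hMsum _ hc1), ← tsum_mul_left]
    have hsh : ∀ k : ℕ, α i ^ (k + 1) * Gaux r s α i (β + x + ((k + 1 : ℕ) : ℝ))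
        = α i * (α i ^ k * Gaux r s α i (β + x + 1 + k)) := by
      intro k
      have harg : β + (x:ℝ) + ((k + 1 : ℕ) : ℝ) = β + x + 1 + k := by push_cast; ring
      rw [harg]; ring
    rw [tsum_congr hsh]
    simp
  -- assemble
  have hLHS : (∑' m : {m : Fin r → ℕ // m i = x}, ugatPmf r β s α m)
      = (∑' m : {m : Fin r → ℕ // m i = x},
          (∏ j, α j ^ (m.1 j)) / ((∑ j, ((m.1 j) : ℝ)) + β) ^ s) / M r β s α := by
    rw [← tsum_div_const]
    exact tsum_congr fun m => (div_div _ _ _).symm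
  rw [hLHS, hsub, key]
end

section
/- Multivariate reliability (survival) function of the UGAT distribution: for x_1,...,x_r ∈ ℕ, P(X_1 ≥ x_1, ..., X_r ≥ x_r) = (∏_{i=1}^{r} α_{i-1}^{x_i}) · M(β + x_1 + ⋯ + x_r, s, α) / M(β, s, α). -/
open scoped BigOperators

/-- Shift equivalence between all tuples and tuples pointwise above `x`. -/
def shiftEquiv (r : ℕ) (x : Fin r → ℕ) :
    (Fin r → ℕ) ≃ {m : Fin r → ℕ // ∀ j, x j ≤ m j} where
  toFun ℓ := ⟨fun j => x j + ℓ j, fun j => Nat.le_add_right _ _⟩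
  invFun m j := m.1 j - x j
  left_inv ℓ := by funext j; simp
  right_inv m := by
    ext j
    exact Nat.add_sub_cancel' (m.2 j)

theorem ugat_reliability (r : ℕ) (hr : 1 ≤ r) (β s : ℝ) (hβ : 0 < β) (hs : 0 < s)
    (α : Fin r → ℝ) (hα : ∀ i, α i ∈ Set.Ioo (0 : ℝ) 1) (x : Fin r → ℕ) :
    (∑' m : {m : Fin r → ℕ // ∀ j, x j ≤ m j}, ugatPmf r β s α m)
      = (∏ i, α i ^ x i) * M r (β + ∑ i, (x i : ℝ)) s α / M r β s α := by
  rw [← Equiv.tsum_eq (shiftEquiv r x)]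
  have key : ∀ ℓ : Fin r → ℕ,
      ugatPmf r β s α ((shiftEquiv r x) ℓ : {m : Fin r → ℕ // ∀ j, x j ≤ m j})
        = (∏ i, α i ^ x i) *
            ((∏ i, α i ^ ℓ i) / ((∑ i, (ℓ i : ℝ)) + (β + ∑ i, (x i : ℝ))) ^ s) /
            M r β s α := by
    intro ℓ
    have h1 : ((shiftEquiv r x) ℓ : Fin r → ℕ) = fun j => x j + ℓ j := rfl
    rw [ugatPmf, h1]
    have h2 : (∑ i, (((x i + ℓ i : ℕ)) : ℝ)) + β
        = (∑ i, (ℓ i : ℝ)) + (β + ∑ i, (x i : ℝ)) := by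
      push_cast
      rw [Finset.sum_add_distrib]
      ring
    have h3 : (∏ i, α i ^ (x i + ℓ i)) = (∏ i, α i ^ x i) * ∏ i, α i ^ ℓ i := by
      rw [← Finset.prod_mul_distrib]
      exact Finset.prod_congr rfl fun i _ => pow_add _ _ _
    rw [h2, h3]
    ring
  rw [tsum_congr key]
  rw [tsum_div_const, tsum_mul_left, M, M]
end

section
/- MIFR characterization for UGAT: the hazard rates h_i are nondecreasing under componentwise shifts, i.e. h_i(x_1+t_1,...,x_r+t_r) ≥ h_i(x_1,...,x_r) for all x,t ∈ ℕ^r and all i, if and only if the ratio M(β+X+1, s, α)/M(β+X, s, α) is nonincreasing in X ∈ ℕ. -/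
open scoped BigOperators

/-- UGAT multivariate hazard rate. -/
noncomputable def ugatHazard (r : ℕ) (β s : ℝ) (α : Fin r → ℝ) (i : Fin r)
    (x : Fin r → ℕ) : ℝ :=
  1 - α i * M r (β + (∑ j, (x j : ℝ)) + 1) s α / M r (β + ∑ j, (x j : ℝ)) s α

theorem ugat_MIFR_iff (r : ℕ) (hr : 1 ≤ r) (β s : ℝ) (hβ : 0 < β) (hs : 0 < s)
    (α : Fin r → ℝ) (hα : ∀ i, α i ∈ Set.Ioo (0 : ℝ) 1) :
    (∀ (i : Fin r) (x t : Fin r → ℕ),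
        ugatHazard r β s α i x ≤ ugatHazard r β s α i (fun j => x j + t j))
      ↔ (∀ X Y : ℕ, X ≤ Y →
        M r (β + Y + 1) s α / M r (β + Y) s α
          ≤ M r (β + X + 1) s α / M r (β + X) s α) := by
  have i0 : Fin r := ⟨0, hr⟩
  constructor
  · intro h X Y hXY
    have key := h i0 (fun j => if j = i0 then X else 0)
      (fun j => if j = i0 then Y - X else 0)
    simp only [ugatHazard] at key
    have hsx : (∑ j, ((if j = i0 then X else 0 : ℕ) : ℝ)) = (X : ℝ) := by
      simp [apply_ite (Nat.cast : ℕ → ℝ)]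
    have hsy : (∑ j, (((if j = i0 then X else 0) + (if j = i0 then Y - X else 0) : ℕ) : ℝ))
        = (Y : ℝ) := by
      have : ∀ j : Fin r, (((if j = i0 then X else 0) + (if j = i0 then Y - X else 0) : ℕ) : ℝ)
          = (if j = i0 then (Y : ℝ) else 0) := by
        intro j
        by_cases hj : j = i0 <;> simp [hj, Nat.add_sub_cancel' hXY]
      rw [Finset.sum_congr rfl fun j _ => this j]
      simp
    rw [hsx, hsy] at key
    have hα0 := (hα i0).1
    have h2 : α i0 * (M r (β + Y + 1) s α / M r (β + Y) s α)
        ≤ α i0 * (M r (β + X + 1) s α / M r (β + X) s α) := by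
      rw [← mul_div_assoc, ← mul_div_assoc]
      linarith [key]
    exact le_of_mul_le_mul_left h2 hα0
  · intro h i x t
    have hXY : (∑ j, x j) ≤ ∑ j, (x j + t j) :=
      Finset.sum_le_sum fun j _ => Nat.le_add_right _ _
    have key := h (∑ j, x j) (∑ j, (x j + t j)) hXY
    have hα0 := (hα i).1
    simp only [ugatHazard]
    have e1 : (∑ j, ((x j : ℝ))) = ((∑ j, x j : ℕ) : ℝ) := by push_cast; ring
    have e2 : (∑ j, (((x j + t j : ℕ)) : ℝ)) = ((∑ j, (x j + t j) : ℕ) : ℝ) := by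
      push_cast; ring
    rw [e1, e2]
    have h2 : α i * (M r (β + (∑ j, (x j + t j) : ℕ) + 1) s α
          / M r (β + (∑ j, (x j + t j) : ℕ)) s α)
        ≤ α i * (M r (β + (∑ j, x j : ℕ) + 1) s α / M r (β + (∑ j, x j : ℕ)) s α) :=
      mul_le_mul_of_nonneg_left key hα0.le
    rw [← mul_div_assoc, ← mul_div_assoc] at h2
    linarith
end
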